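/- For (a,b,c) ∈ k³ \ {(0,0,0)}: if a ≠ 0 or bc ≠ 0, then the right ideal (ax+by+cz)Λ is 3-dimensional over k and equals U(a,b,c) (in particular U(a,b,c) is a two-sided ideal); the right ideals yΛ = (0,1,0)Λ and zΛ = (0,0,1)Λ are 2-dimensional over k, with yΛ having k-basis {y, yx} and zΛ having k-basis {z, zx}. -/

import Mathlib

open CategoryTheory Limits Opposite

/-- The algebra `Λ = Λ(q)` of Ringel–Zhang: a `k`-algebra with distinguished elements
`x, y, z` satisfying the defining relations
`x² = y² = z² = 0`, `yz = 0`, `xy + q·yx = 0`, `xz = zx`, `zy = zx`,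
and admitting the `k`-basis `{1, x, y, z, yx, zx}`.
Any such algebra is canonically isomorphic to the quotient of the free algebra
`k⟨x,y,z⟩` by the two-sided ideal generated by these relations. -/
structure LambdaAlg (k : Type) [Field k] (q : k) (Λ : Type) [Ring Λ] [Algebra k Λ] :
    Type where
  x : Λ
  y : Λ
  z : Λ
  hxx : x * x = 0
  hyy : y * y = 0
  hzz : z * z = 0
  hyz : y * z = 0
  hxy : x * y + q • (y * x) = 0
  hxz : x * z - z * x = 0
  hzy : z * y - z * x = 0
  basis : Module.Basis (Fin 6) k Λ
  hb0 : basis 0 = 1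
  hb1 : basis 1 = x
  hb2 : basis 2 = y
  hb3 : basis 3 = z
  hb4 : basis 4 = y * x
  hb5 : basis 5 = z * x

namespace LambdaAlg

variable {k : Type} [Field k] {q : k} {Λ : Type} [Ring Λ] [Algebra k Λ]

/-- The element `ax + by + cz` of `Λ`. -/
def w (D : LambdaAlg k q Λ) (a b c : k) : Λ := a • D.x + b • D.y + c • D.z

/-- The left ideal `U(a,b,c) = Λ(ax+by+cz) + Λ·yx + Λ·zx` of `Λ`. -/
def U (D : LambdaAlg k q Λ) (a b c : k) : Submodule Λ Λ :=
  Submodule.span Λ {D.w a b c, D.y * D.x, D.z * D.x}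

/-- The left `Λ`-module `M(a,b,c) = Λ/U(a,b,c)`. -/
abbrev M (D : LambdaAlg k q Λ) (a b c : k) : Type := Λ ⧸ D.U a b c

/-- The right ideal `U′(a,b,c) = (ax+by+cz)Λ + yx·Λ + zx·Λ` of `Λ`,
viewed as a `Λᵐᵒᵖ`-submodule of `Λ`. -/
def U' (D : LambdaAlg k q Λ) (a b c : k) : Submodule Λᵐᵒᵖ Λ :=
  Submodule.span Λᵐᵒᵖ {D.w a b c, D.y * D.x, D.z * D.x}

/-- The right `Λ`-module `M′(a,b,c) = Λ/U′(a,b,c)` (a module over `Λᵐᵒᵖ`). -/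
abbrev M' (D : LambdaAlg k q Λ) (a b c : k) : Type := Λ ⧸ D.U' a b c

/-- The `k`-subspace `{m ∈ M : x·m = y·m = z·m = 0}` of a left `Λ`-module `M`;
since `x, y, z` generate `rad Λ` and every simple `Λ`-module is isomorphic to `k`,
this is the socle of `M`. -/
def ann (D : LambdaAlg k q Λ) (M : Type) [AddCommGroup M] [Module k M] [Module Λ M]
    [IsScalarTower k Λ M] : Submodule k M where
  carrier := {m | D.x • m = 0 ∧ D.y • m = 0 ∧ D.z • m = 0}
  add_mem' := by
    rintro a b ⟨h1, h2, h3⟩ ⟨g1, g2, g3⟩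
    simp [smul_add, h1, h2, h3, g1, g2, g3]
  zero_mem' := by simp
  smul_mem' := by
    rintro a m ⟨h1, h2, h3⟩
    refine ⟨?_, ?_, ?_⟩ <;> rw [smul_comm] <;> simp [h1, h2, h3]

/-- The submodule `(rad Λ)·M = x·M + y·M + z·M` of a left `Λ`-module `M`. -/
def radM (D : LambdaAlg k q Λ) (M : Type) [AddCommGroup M] [Module Λ M] :
    Submodule Λ M :=
  Submodule.span Λ
    (Set.range (fun m : M => D.x • m) ∪ Set.range (fun m : M => D.y • m) ∪
      Set.range (fun m : M => D.z • m))

end LambdaAlg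

/-- A module is indecomposable if it is nonzero and is not the direct sum of two
nonzero submodules. -/
def IsIndecomposable (R : Type) [Ring R] (M : Type) [AddCommGroup M] [Module R M] :
    Prop :=
  Nontrivial M ∧
    ∀ N₁ N₂ : Submodule R M, N₁ ⊓ N₂ = ⊥ → N₁ ⊔ N₂ = ⊤ → N₁ = ⊥ ∨ N₂ = ⊥

/-- A module is torsionless if it admits an injective linear map into a finite free
module. -/
def IsTorsionless (R : Type) [Ring R] (M : Type) [AddCommGroup M] [Module R M] : Prop :=
  ∃ (n : ℕ) (f : M →ₗ[R] (Fin n → R)), Function.Injective f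

/-- The canonical evaluation map `M → M** = Hom_{Λᵒᵖ}(Hom_Λ(M, Λ), Λ)`,
sending `m` to `f ↦ f m`. -/
def evalMap (Λ : Type) [Ring Λ] (M : Type) [AddCommGroup M] [Module Λ M] :
    M → ((M →ₗ[Λ] Λ) →ₗ[Λᵐᵒᵖ] Λ) := fun m =>
  { toFun := fun f => f m
    map_add' := fun _ _ => rfl
    map_smul' := fun _ _ => rfl }

/-- The transformation `ω′(a,b,c) = (a, q⁻¹b, −((a+q⁻¹b)/a)·c)` on triples. -/
def omegaPrime {k : Type} [Field k] (q : k) (t : k × k × k) : k × k × k :=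
  (t.1, q⁻¹ * t.2.1, -((t.1 + q⁻¹ * t.2.1) / t.1) * t.2.2)

/-! Every product of two of the generators `x, y, z` lies in `soc Λ = k·yx + k·zx`, and
`soc Λ` is annihilated by `x, y, z` on both sides. As `x, y, z` generate `Λ` as a `k`-algebra,
a `k`-subspace stable under multiplication by them on one side is an ideal on that side; so
for `w = ax + by + cz` the space `k·w + soc Λ` is a two-sided ideal, which equals `U(a,b,c)`
and contains `wΛ`. Conversely `w·x = b·yx + c·zx`, `w·y = -aq·yx + c·zx` and `w·z = a·zx`
span `soc Λ` as soon as `a ≠ 0` or `bc ≠ 0`, hence `wΛ = k·w + soc Λ`, of dimension 3 since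
`w ∉ soc Λ`. The same stability argument gives `yΛ = k·y + k·yx` and `zΛ = k·z + k·zx`. -/

section

variable {k R M : Type*} [CommSemiring k] [Semiring R] [Algebra k R] [AddCommMonoid M]
  [Module k M] [Module R M] [IsScalarTower k R M]

theorem Submodule.smul_mem_span_of_adjoin_eq_top {s : Set R} (hs : Algebra.adjoin k s = ⊤)
    {S : Set M} (h : ∀ g ∈ s, ∀ t ∈ S, g • t ∈ span k S) (r : R) {t : M}
    (ht : t ∈ span k S) : r • t ∈ span k S := by
  have hr : r ∈ Algebra.adjoin k s := hs ▸ Algebra.mem_top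
  induction hr using Algebra.adjoin_induction generalizing t with
  | mem g hg =>
    induction ht using Submodule.span_induction with
    | mem t ht => exact h g hg t ht
    | zero => simp
    | add t t' _ _ ht ht' => rw [smul_add]; exact add_mem ht ht'
    | smul c t _ ht => rw [smul_comm]; exact Submodule.smul_mem _ c ht
  | algebraMap c => rw [algebraMap_smul]; exact Submodule.smul_mem _ c ht
  | add r r' _ _ hr hr' => rw [add_smul]; exact add_mem (hr ht) (hr' ht)
  | mul r r' _ _ hr hr' => rw [mul_smul]; exact hr (hr' ht)

theorem Submodule.coe_span_eq_coe_span_of_adjoin_eq_top {s : Set R}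
    (hs : Algebra.adjoin k s = ⊤) {S : Set M} (h : ∀ g ∈ s, ∀ t ∈ S, g • t ∈ span k S) :
    (span R S : Set M) = span k S := by
  refine subset_antisymm (fun t ht => ?_) (span_le_restrictScalars k R S)
  induction ht using Submodule.span_induction with
  | mem t ht => exact subset_span ht
  | zero => exact zero_mem _
  | add t t' _ _ ht ht' => exact add_mem ht ht'
  | smul r t _ ht => exact smul_mem_span_of_adjoin_eq_top hs h r ht

end

namespace LambdaAlg

open Submodule

variable {k : Type} [Field k] {q : k} {Λ : Type} [Ring Λ] [Algebra k Λ] (D : LambdaAlg k q Λ)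

theorem x_mul_y : D.x * D.y = -(q • (D.y * D.x)) := eq_neg_of_add_eq_zero_left D.hxy

theorem x_mul_z : D.x * D.z = D.z * D.x := sub_eq_zero.mp D.hxz

theorem z_mul_y : D.z * D.y = D.z * D.x := sub_eq_zero.mp D.hzy

theorem x_mul_yx : D.x * (D.y * D.x) = 0 := by
  rw [← mul_assoc, x_mul_y, neg_mul, smul_mul_assoc, mul_assoc, D.hxx, mul_zero, smul_zero,
    neg_zero]

theorem y_mul_yx : D.y * (D.y * D.x) = 0 := by rw [← mul_assoc, D.hyy, zero_mul]

theorem z_mul_yx : D.z * (D.y * D.x) = 0 := by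
  rw [← mul_assoc, z_mul_y, mul_assoc, D.hxx, mul_zero]

theorem x_mul_zx : D.x * (D.z * D.x) = 0 := by
  rw [← mul_assoc, x_mul_z, mul_assoc, D.hxx, mul_zero]

theorem y_mul_zx : D.y * (D.z * D.x) = 0 := by rw [← mul_assoc, D.hyz, zero_mul]

theorem z_mul_zx : D.z * (D.z * D.x) = 0 := by rw [← mul_assoc, D.hzz, zero_mul]

def soc : Submodule k Λ := span k {D.y * D.x, D.z * D.x}

theorem adjoin_eq_top : Algebra.adjoin k {D.x, D.y, D.z} = ⊤ := by
  rw [← Algebra.toSubmodule_eq_top, eq_top_iff, ← D.basis.span_eq, span_le]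
  have hx : D.x ∈ Algebra.adjoin k {D.x, D.y, D.z} := Algebra.subset_adjoin (by simp)
  have hy : D.y ∈ Algebra.adjoin k {D.x, D.y, D.z} := Algebra.subset_adjoin (by simp)
  have hz : D.z ∈ Algebra.adjoin k {D.x, D.y, D.z} := Algebra.subset_adjoin (by simp)
  rintro _ ⟨i, rfl⟩
  fin_cases i
  · simp [D.hb0, one_mem]
  · simpa [D.hb1] using hx
  · simpa [D.hb2] using hy
  · simpa [D.hb3] using hz
  · simpa [D.hb4] using mul_mem hy hx
  · simpa [D.hb5] using mul_mem hz hx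

theorem adjoin_unop_preimage_eq_top :
    Algebra.adjoin k (MulOpposite.unop ⁻¹' {D.x, D.y, D.z}) = ⊤ := by
  rw [← Subalgebra.op_adjoin, D.adjoin_eq_top, Subalgebra.op_top]

theorem coe_span_eq_span {S : Set Λ}
    (h : ∀ g ∈ ({D.x, D.y, D.z} : Set Λ), ∀ t ∈ S, g * t ∈ span k S) :
    (span Λ S : Set Λ) = span k S :=
  coe_span_eq_coe_span_of_adjoin_eq_top D.adjoin_eq_top h

theorem coe_opSpan_eq_span {S : Set Λ}
    (h : ∀ g ∈ ({D.x, D.y, D.z} : Set Λ), ∀ t ∈ S, t * g ∈ span k S) :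
    (span Λᵐᵒᵖ S : Set Λ) = span k S :=
  coe_span_eq_coe_span_of_adjoin_eq_top D.adjoin_unop_preimage_eq_top
    fun g hg t ht => by simpa [MulOpposite.smul_eq_mul_unop] using h g.unop hg t ht

theorem mul_mem_soc {u v : Λ} (hu : u ∈ span k {D.x, D.y, D.z})
    (hv : v ∈ span k {D.x, D.y, D.z}) : u * v ∈ D.soc := by
  have hyx : D.y * D.x ∈ D.soc := subset_span (by simp)
  have hzx : D.z * D.x ∈ D.soc := subset_span (by simp)
  suffices span k {D.x, D.y, D.z} * span k {D.x, D.y, D.z} ≤ D.soc from this (mul_mem_mul hu hv)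
  rw [span_mul_span, span_le, Set.mul_subset_iff]
  rintro _ (rfl | rfl | rfl) _ (rfl | rfl | rfl)
  all_goals simp [D.hxx, D.hyy, D.hzz, D.hyz, x_mul_y, x_mul_z, z_mul_y, hyx, hzx, smul_mem]

theorem soc_mul_eq_zero {t g : Λ} (ht : t ∈ D.soc) (hg : g ∈ ({D.x, D.y, D.z} : Set Λ)) :
    t * g = 0 ∧ g * t = 0 := by
  obtain ⟨a, b, rfl⟩ := mem_span_pair.mp ht
  rcases hg with rfl | rfl | rfl <;>
    simp [add_mul, mul_add, mul_assoc, D.hxx, x_mul_y, x_mul_z, x_mul_yx, y_mul_yx, z_mul_yx,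
      x_mul_zx, y_mul_zx, z_mul_zx]

theorem w_mem_span_xyz (a b c : k) : D.w a b c ∈ span k {D.x, D.y, D.z} :=
  add_mem (add_mem (smul_mem _ a (subset_span (by simp))) (smul_mem _ b (subset_span (by simp))))
    (smul_mem _ c (subset_span (by simp)))

theorem mul_mem_span_w_yx_zx {a b c : k} :
    ∀ g ∈ ({D.x, D.y, D.z} : Set Λ), ∀ t ∈ ({D.w a b c, D.y * D.x, D.z * D.x} : Set Λ),
      t * g ∈ span k {D.w a b c, D.y * D.x, D.z * D.x} ∧
      g * t ∈ span k {D.w a b c, D.y * D.x, D.z * D.x} := by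
  have hsoc : D.soc ≤ span k {D.w a b c, D.y * D.x, D.z * D.x} :=
    span_mono (Set.subset_insert _ _)
  intro g hg t ht
  have hg' : g ∈ span k {D.x, D.y, D.z} := subset_span hg
  rcases ht with rfl | ht
  · exact ⟨hsoc (D.mul_mem_soc (D.w_mem_span_xyz a b c) hg'),
      hsoc (D.mul_mem_soc hg' (D.w_mem_span_xyz a b c))⟩
  · obtain ⟨h₁, h₂⟩ := D.soc_mul_eq_zero (subset_span ht) hg
    simp [h₁, h₂]

theorem w_mul_x (a b c : k) : D.w a b c * D.x = b • (D.y * D.x) + c • (D.z * D.x) := by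
  simp [w, add_mul, D.hxx]

theorem w_mul_y (a b c : k) :
    D.w a b c * D.y = -((a * q) • (D.y * D.x)) + c • (D.z * D.x) := by
  simp [w, add_mul, D.hyy, x_mul_y, z_mul_y, smul_smul]

theorem w_mul_z (a b c : k) : D.w a b c * D.z = a • (D.z * D.x) := by
  simp [w, add_mul, D.hzz, D.hyz, x_mul_z]

theorem yx_mem_and_zx_mem_opSpan_w (hq : q ≠ 0) {a b c : k} (h : a ≠ 0 ∨ b * c ≠ 0) :
    D.y * D.x ∈ span Λᵐᵒᵖ {D.w a b c} ∧ D.z * D.x ∈ span Λᵐᵒᵖ {D.w a b c} := by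
  set N := (span Λᵐᵒᵖ {D.w a b c}).restrictScalars k
  have hmul (r : Λ) : D.w a b c * r ∈ N := by
    simpa [N] using smul_mem _ (MulOpposite.op r) (mem_span_singleton_self (D.w a b c))
  by_cases ha : a = 0
  · obtain ⟨hb, hc⟩ := mul_ne_zero_iff.mp (h.resolve_left (not_not.mpr ha))
    have hzx : D.z * D.x ∈ N := (smul_mem_iff N hc).mp (by simpa [ha, w_mul_y] using hmul D.y)
    refine ⟨(smul_mem_iff N hb).mp ?_, hzx⟩
    simpa [w_mul_x] using sub_mem (hmul D.x) (smul_mem N c hzx)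
  · have hzx : D.z * D.x ∈ N := (smul_mem_iff N ha).mp (by simpa [w_mul_z] using hmul D.z)
    refine ⟨(smul_mem_iff N (mul_ne_zero ha hq)).mp ?_, hzx⟩
    simpa [w_mul_y] using sub_mem (smul_mem N c hzx) (hmul D.y)

theorem coe_opSpan_w (hq : q ≠ 0) {a b c : k} (h : a ≠ 0 ∨ b * c ≠ 0) :
    (span Λᵐᵒᵖ {D.w a b c} : Set Λ) = span k {D.w a b c, D.y * D.x, D.z * D.x} := by
  obtain ⟨hyx, hzx⟩ := D.yx_mem_and_zx_mem_opSpan_w hq h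
  have hspan : span Λᵐᵒᵖ {D.w a b c} = span Λᵐᵒᵖ {D.w a b c, D.y * D.x, D.z * D.x} :=
    le_antisymm (span_mono (by simp)) (span_le.mpr <| by
      simp [Set.insert_subset_iff, hyx, hzx, mem_span_singleton_self])
  rw [hspan]
  exact D.coe_opSpan_eq_span fun g hg t ht => (D.mul_mem_span_w_yx_zx g hg t ht).1

theorem coe_U (a b c : k) : (D.U a b c : Set Λ) = span k {D.w a b c, D.y * D.x, D.z * D.x} :=
  D.coe_span_eq_span fun g hg t ht => (D.mul_mem_span_w_yx_zx g hg t ht).2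

theorem linearIndependent_basis_pair {i j : Fin 6} (hij : i ≠ j) :
    LinearIndependent k ![D.basis i, D.basis j] := by
  have hinj : Function.Injective ![i, j] := by
    intro m n; fin_cases m <;> fin_cases n <;> simp [hij, hij.symm]
  convert D.basis.linearIndependent.comp _ hinj using 1
  ext m; fin_cases m <;> rfl

theorem w_notMem_soc {a b c : k} (h : (a, b, c) ≠ (0, 0, 0)) : D.w a b c ∉ D.soc := by
  intro hw
  obtain ⟨s, t, hst⟩ := mem_span_pair.mp hw
  have hrepr (i : Fin 6) (h4 : i ≠ 4) (h5 : i ≠ 5) : D.basis.repr (D.w a b c) i = 0 := by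
    rw [← hst, ← D.hb4, ← D.hb5]
    simp [h4.symm, h5.symm]
  have hcoord : (D.basis.repr (D.w a b c) 1, D.basis.repr (D.w a b c) 2,
      D.basis.repr (D.w a b c) 3) = (a, b, c) := by
    simp [w, ← D.hb1, ← D.hb2, ← D.hb3]
  rw [← hcoord, hrepr 1 (by decide) (by decide), hrepr 2 (by decide) (by decide),
    hrepr 3 (by decide) (by decide)] at h
  exact h rfl

theorem finrank_span_w_yx_zx {a b c : k} (h : (a, b, c) ≠ (0, 0, 0)) :
    Module.finrank k (span k {D.w a b c, D.y * D.x, D.z * D.x}) = 3 := by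
  have hsoc : LinearIndependent k ![D.y * D.x, D.z * D.x] := by
    simpa [D.hb4, D.hb5] using D.linearIndependent_basis_pair (i := 4) (j := 5) (by decide)
  have hli : LinearIndependent k ![D.w a b c, D.y * D.x, D.z * D.x] :=
    linearIndependent_finCons.mpr ⟨hsoc, by
      rw [Matrix.range_cons_cons_empty]; exact D.w_notMem_soc h⟩
  rw [← Set.singleton_union, ← Matrix.range_cons_cons_empty, ← Matrix.range_cons,
    finrank_span_eq_card hli, Fintype.card_fin]

theorem finrank_opSpan_w (hq : q ≠ 0) {a b c : k} (h₀ : (a, b, c) ≠ (0, 0, 0))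
    (h : a ≠ 0 ∨ b * c ≠ 0) : Module.finrank k (span Λᵐᵒᵖ {D.w a b c}) = 3 := by
  have hk : (span Λᵐᵒᵖ {D.w a b c}).restrictScalars k
      = span k {D.w a b c, D.y * D.x, D.z * D.x} :=
    SetLike.coe_injective (D.coe_opSpan_w hq h)
  change Module.finrank k ((span Λᵐᵒᵖ {D.w a b c}).restrictScalars k) = 3
  rw [hk, D.finrank_span_w_yx_zx h₀]

theorem opSpan_pair_mul_eq (u r : Λ) : span Λᵐᵒᵖ {u, u * r} = span Λᵐᵒᵖ {u} :=
  le_antisymm (span_le.mpr <| Set.insert_subset (mem_span_singleton_self u) <|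
    Set.singleton_subset_iff.mpr <| mem_span_singleton.mpr ⟨MulOpposite.op r, rfl⟩)
    (span_mono (Set.singleton_subset_iff.mpr (Set.mem_insert _ _)))

theorem coe_opSpan_y : (span Λᵐᵒᵖ {D.y} : Set Λ) = span k {D.y, D.y * D.x} := by
  rw [← opSpan_pair_mul_eq D.y D.x]
  refine D.coe_opSpan_eq_span ?_
  rintro g hg t (rfl | rfl)
  · rcases hg with rfl | rfl | rfl
    · exact subset_span (by simp)
    · simp [D.hyy]
    · simp [D.hyz]
  · simp [(D.soc_mul_eq_zero (t := D.y * D.x) (subset_span (by simp)) hg).1]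

theorem coe_opSpan_z : (span Λᵐᵒᵖ {D.z} : Set Λ) = span k {D.z, D.z * D.x} := by
  rw [← opSpan_pair_mul_eq D.z D.x]
  refine D.coe_opSpan_eq_span ?_
  rintro g hg t (rfl | rfl)
  · rcases hg with rfl | rfl | rfl
    · exact subset_span (by simp)
    · rw [z_mul_y]; exact subset_span (by simp)
    · simp [D.hzz]
  · simp [(D.soc_mul_eq_zero (t := D.z * D.x) (subset_span (by simp)) hg).1]

end LambdaAlg

/-- If `a ≠ 0` or `bc ≠ 0`, the right ideal `(ax+by+cz)Λ` is 3-dimensional and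
equals `U(a,b,c)` (so `U(a,b,c)` is two-sided); the right ideals `yΛ` and `zΛ`
are 2-dimensional with `k`-bases `{y, yx}` and `{z, zx}` respectively. -/
theorem statement7 (k : Type) [Field k] (q : k) (hq : q ≠ 0)
    (Λ : Type) [Ring Λ] [Algebra k Λ] (D : LambdaAlg k q Λ) :
    (∀ a b c : k, (a, b, c) ≠ (0, 0, 0) → (a ≠ 0 ∨ b * c ≠ 0) →
      Module.finrank k ↥(Submodule.span Λᵐᵒᵖ {D.w a b c}) = 3
      ∧ (Submodule.span Λᵐᵒᵖ {D.w a b c} : Set Λ) = (D.U a b c : Set Λ))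
    ∧ ((Submodule.span Λᵐᵒᵖ {D.y} : Set Λ) = (Submodule.span k {D.y, D.y * D.x} : Set Λ)
       ∧ LinearIndependent k ![D.y, D.y * D.x])
    ∧ ((Submodule.span Λᵐᵒᵖ {D.z} : Set Λ) = (Submodule.span k {D.z, D.z * D.x} : Set Λ)
       ∧ LinearIndependent k ![D.z, D.z * D.x]) := by
  refine ⟨fun a b c h₀ h => ⟨D.finrank_opSpan_w hq h₀ h, ?_⟩,
    ⟨D.coe_opSpan_y, ?_⟩, ⟨D.coe_opSpan_z, ?_⟩⟩
  · rw [D.coe_opSpan_w hq h, D.coe_U]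
  · simpa [D.hb2, D.hb4] using D.linearIndependent_basis_pair (i := 2) (j := 4) (by decide)
  · simpa [D.hb3, D.hb5] using D.linearIndependent_basis_pair (i := 3) (j := 5) (by decide)
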